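/- Fix κ ∈ (0,1) and t > 0. The equation e^{√a t}·(|κ| + √a) = ((√a + 1)/(√a − 1))·(√a − |κ|) has a unique solution a > 1. -/

import Mathlib

/-!
Put `s = √a` and `k = |κ|`. For `s > 1` the equation says `exp (s t) = R s` with
`R s = (s + 1)(s - k) / ((s - 1)(s + k))`. The left side increases strictly, while `R` decreases
strictly because cross-multiplying `R x > R y` leaves `2 (1 - k) (y - x) (x y + k) > 0`; this gives
uniqueness. For existence, clear denominators and apply the intermediate value theorem between
`s = 1`, where `R` has its pole, and a point `s` with `exp (s t) > 5`.
-/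

open Real

section
variable {k t s : ℝ}

lemma ratio_strictAntiOn (hk₀ : -1 < k) (hk₁ : k < 1) :
    StrictAntiOn (fun s : ℝ => (s + 1) * (s - k) / ((s - 1) * (s + k))) (Set.Ioi 1) := by
  intro x (hx : 1 < x) y (hy : 1 < y) hxy
  have hcross : (x + 1) * (x - k) * ((y - 1) * (y + k)) - (y + 1) * (y - k) * ((x - 1) * (x + k))
      = 2 * (1 - k) * (y - x) * (x * y + k) := by ring
  have hpos : 0 < 2 * (1 - k) * (y - x) * (x * y + k) := by
    have : 0 < x * y + k := by nlinarith
    have : 0 < y - x := by linarith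
    have : 0 < 1 - k := by linarith
    positivity
  rw [div_lt_div_iff₀ (mul_pos (by linarith) (by linarith)) (mul_pos (by linarith) (by linarith))]
  linarith

lemma exp_mul_eq_ratio_iff (hk₀ : -1 < k) (hs : 1 < s) :
    exp (s * t) = (s + 1) * (s - k) / ((s - 1) * (s + k)) ↔
      exp (s * t) * ((s - 1) * (s + k)) = (s + 1) * (s - k) :=
  eq_div_iff (mul_pos (by linarith) (by linarith)).ne'

lemma exists_exp_mul_eq_ratio (hk₀ : -1 < k) (hk₁ : k < 1) (ht : 0 < t) :
    ∃ s, 1 < s ∧ exp (s * t) = (s + 1) * (s - k) / ((s - 1) * (s + k)) := by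
  set φ : ℝ → ℝ := fun s => exp (s * t) * ((s - 1) * (s + k)) - (s + 1) * (s - k)
  -- `b ≥ 4` and `exp (b t) > 5` suffice for `5 (b - 1)(b + k) > (b + 1)(b - k)`
  set b := 4 + 4 / t
  have hb : 4 < b := by linarith [show 0 < 4 / t by positivity]
  have hφ₁ : φ 1 < 0 := by simp only [φ]; nlinarith
  have hφb : 0 < φ b := by
    have hexp : 5 < exp (b * t) := by
      have : b * t = 4 * t + 4 := by simp only [b]; field_simp
      linarith [add_one_le_exp (b * t)]
    simp only [φ]
    nlinarith [mul_pos (by linarith : (0:ℝ) < b - 1) (by linarith : 0 < b + k)]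
  obtain ⟨s, ⟨hs₁, -⟩, hs⟩ := intermediate_value_Icc (by linarith : (1:ℝ) ≤ b)
    (by fun_prop : Continuous φ).continuousOn ⟨hφ₁.le, hφb.le⟩
  have hs₁ : 1 < s := hs₁.lt_of_ne <| by rintro rfl; exact hφ₁.ne hs
  exact ⟨s, hs₁, (exp_mul_eq_ratio_iff hk₀ hs₁).2 (sub_eq_zero.1 hs)⟩

lemma existsUnique_exp_mul_eq_ratio (hk₀ : -1 < k) (hk₁ : k < 1) (ht : 0 < t) :
    ∃! s, 1 < s ∧ exp (s * t) = (s + 1) * (s - k) / ((s - 1) * (s + k)) := by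
  obtain ⟨s, hs₁, hs⟩ := exists_exp_mul_eq_ratio hk₀ hk₁ ht
  have hmono : StrictMonoOn (fun s => exp (s * t) + -((s + 1) * (s - k) / ((s - 1) * (s + k))))
      (Set.Ioi 1) :=
    ((exp_strictMono.comp (strictMono_mul_right_of_pos ht)).strictMonoOn _).add
      (ratio_strictAntiOn hk₀ hk₁).neg
  refine ⟨s, ⟨hs₁, hs⟩, fun r ⟨hr₁, hr⟩ => hmono.injOn hr₁ hs₁ ?_⟩
  simp only [hr, hs, add_neg_cancel]

lemma exp_mul_eq_iff_eq_ratio (hk₀ : -1 < k) (hs : 1 < s) :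
    exp (s * t) * (k + s) = (s + 1) / (s - 1) * (s - k) ↔
      exp (s * t) = (s + 1) * (s - k) / ((s - 1) * (s + k)) := by
  rw [exp_mul_eq_ratio_iff hk₀ hs, div_mul_eq_mul_div, eq_div_iff (by linarith : s - 1 ≠ 0)]
  constructor <;> intro h <;> linear_combination h

end

theorem stmt17 (κ t : ℝ) (hκ : κ ∈ Set.Ioo (0 : ℝ) 1) (ht : 0 < t) :
    ∃! a : ℝ, 1 < a ∧
      Real.exp (Real.sqrt a * t) * (|κ| + Real.sqrt a) =
        ((Real.sqrt a + 1) / (Real.sqrt a - 1)) * (Real.sqrt a - |κ|) := by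
  have hk₀ : -1 < |κ| := by linarith [abs_nonneg κ]
  have hk₁ : |κ| < 1 := by rw [abs_of_pos hκ.1]; exact hκ.2
  obtain ⟨s, ⟨hs₁, hs⟩, huniq⟩ := existsUnique_exp_mul_eq_ratio hk₀ hk₁ ht
  have hsqrt_sq : √(s ^ 2) = s := sqrt_sq (by linarith)
  refine ⟨s ^ 2, ⟨by nlinarith, ?_⟩, fun a ⟨ha₁, ha⟩ => ?_⟩
  · rwa [hsqrt_sq, exp_mul_eq_iff_eq_ratio hk₀ hs₁]
  · have hsqrt : 1 < √a := (lt_sqrt zero_le_one).2 (by simpa using ha₁)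
    rw [← sq_sqrt (by linarith : 0 ≤ a), huniq (√a) ⟨hsqrt, (exp_mul_eq_iff_eq_ratio hk₀ hsqrt).1 ha⟩]
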